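/- Let g : ℝ² → ℝ≥0 be measurable with g, g|x|² ∈ L¹(ℝ²). Then ∫ g(x) log⁻ g(x) dx ≤ (1/2) ∫ g(x)|x|² dx + log(2π) ∫ g(x) dx + 1/e, where log⁻ g = max(−log g, 0) is the negative part of the logarithm (with the convention g log⁻ g = 0 where g = 0). -/

import Mathlib

/-!
Since `t log (M / t) ≤ M / e` for all `t, M ≥ 0` (this is `log u ≤ u / e`), the pointwise bound
`t log⁻ t ≤ t (-log φ) + φ / e` holds for every weight `0 < φ ≤ 1`. Integrating it with `t = g x`
and `φ` the standard Gaussian density, whose negative logarithm is `|x|² / 2 + log (2π)` and whose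
integral is `1`, gives the claim.
-/

open MeasureTheory Real

lemma mul_log_div_le_div_exp_one {t M : ℝ} (ht : 0 ≤ t) (hM : 0 ≤ M) :
    t * log (M / t) ≤ M / exp 1 := by
  rcases ht.eq_or_lt with rfl | ht
  · simp only [zero_mul]; positivity
  rcases hM.eq_or_lt with rfl | hM
  · simp
  have hlog : log (M / t / exp 1) ≤ M / t / exp 1 - 1 := log_le_sub_one_of_pos (by positivity)
  rw [log_div (by positivity) (exp_ne_zero 1), log_exp] at hlog
  calc t * log (M / t) ≤ t * (M / t / exp 1) := by gcongr; linarith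
    _ = M / exp 1 := by field_simp

lemma mul_max_neg_log_le {t M : ℝ} (ht : 0 ≤ t) (hM₀ : 0 < M) (hM₁ : M ≤ 1) :
    t * max (-log t) 0 ≤ t * -log M + M / exp 1 := by
  have hlogM : 0 ≤ -log M := neg_nonneg.2 (log_nonpos hM₀.le hM₁)
  rw [mul_max_of_nonneg _ _ ht, mul_zero]
  refine max_le ?_ (by positivity)
  have hsplit : t * -log t = t * log (M / t) + t * -log M := by
    rcases ht.eq_or_lt with rfl | ht
    · simp
    · rw [log_div hM₀.ne' ht.ne']; ring
  linarith [mul_log_div_le_div_exp_one ht hM₀.le]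

theorem integral_mul_max_neg_log_le {α : Type*} [MeasurableSpace α] {μ : Measure α}
    {g φ : α → ℝ} (hg : ∀ x, 0 ≤ g x) (hφ₀ : ∀ x, 0 < φ x) (hφ₁ : ∀ x, φ x ≤ 1)
    (hgφ : Integrable (fun x => g x * -log (φ x)) μ) (hφ : Integrable φ μ) :
    ∫ x, g x * max (-log (g x)) 0 ∂μ ≤ ∫ x, g x * -log (φ x) ∂μ + (∫ x, φ x ∂μ) / exp 1 := by
  rw [← integral_div, ← integral_add hgφ (hφ.div_const _)]
  refine integral_mono_of_nonneg (.of_forall fun x => ?_) (hgφ.add (hφ.div_const _))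
    (.of_forall fun x => mul_max_neg_log_le (hg x) (hφ₀ x) (hφ₁ x))
  have := hg x
  positivity

section Gaussian

variable (V : Type*) [NormedAddCommGroup V] [InnerProductSpace ℝ V]

noncomputable def stdGaussianDensity (x : V) : ℝ :=
  exp (-(1 / 2) * ‖x‖ ^ 2) / (2 * π) ^ (Module.finrank ℝ V / 2 : ℝ)

variable {V}

lemma stdGaussianDensity_pos (x : V) : 0 < stdGaussianDensity V x := by
  unfold stdGaussianDensity; positivity

lemma stdGaussianDensity_le_one (x : V) : stdGaussianDensity V x ≤ 1 := by
  unfold stdGaussianDensity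
  rw [div_le_one (by positivity)]
  calc exp (-(1 / 2) * ‖x‖ ^ 2) ≤ 1 := exp_le_one_iff.2 (by nlinarith [sq_nonneg ‖x‖])
    _ ≤ _ := one_le_rpow (by linarith [pi_gt_three]) (by positivity)

lemma neg_log_stdGaussianDensity (x : V) :
    -log (stdGaussianDensity V x) = ‖x‖ ^ 2 / 2 + Module.finrank ℝ V / 2 * log (2 * π) := by
  unfold stdGaussianDensity
  rw [log_div (exp_ne_zero _) (by positivity), log_exp, log_rpow (by positivity)]
  ring

variable [FiniteDimensional ℝ V] [MeasurableSpace V] [BorelSpace V]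

lemma integral_stdGaussianDensity : ∫ x, stdGaussianDensity V x = 1 := by
  unfold stdGaussianDensity
  rw [integral_div, GaussianFourier.integral_rexp_neg_mul_sq_norm (by norm_num),
    show π / (1 / 2) = 2 * π by ring]
  exact div_self (by positivity)

lemma integrable_stdGaussianDensity : Integrable (stdGaussianDensity V) :=
  .of_integral_ne_zero (by rw [integral_stdGaussianDensity]; exact one_ne_zero)

end Gaussian

theorem negative_entropy_bound_general
    (g : EuclideanSpace ℝ (Fin 2) → ℝ) (hg : ∀ x, 0 ≤ g x)
    (hint : Integrable g)
    (hmom : Integrable (fun x => g x * ‖x‖ ^ 2)) :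
    ∫ x, g x * max (-Real.log (g x)) 0 ≤
      (1 / 2) * (∫ x, g x * ‖x‖ ^ 2) + Real.log (2 * Real.pi) * (∫ x, g x)
        + 1 / Real.exp 1 := by
  have hlogφ : ∀ x, g x * -log (stdGaussianDensity _ x)
      = 1 / 2 * (g x * ‖x‖ ^ 2) + log (2 * π) * g x := by
    intro x
    simp only [neg_log_stdGaussianDensity, finrank_euclideanSpace_fin]
    ring
  have hgφ : Integrable (fun x => g x * -log (stdGaussianDensity _ x)) := by
    simp only [hlogφ]
    exact (hmom.const_mul _).add (hint.const_mul _)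
  calc _ ≤ _ := integral_mul_max_neg_log_le hg stdGaussianDensity_pos stdGaussianDensity_le_one
        hgφ integrable_stdGaussianDensity
    _ = _ := by
      simp only [hlogφ, integral_stdGaussianDensity]
      rw [integral_add (hmom.const_mul _) (hint.const_mul _), integral_const_mul,
        integral_const_mul]

/-- Control of the negative part of the entropy of a nonnegative density on the plane
by its second moment and mass: `∫ g log⁻ g ≤ (1/2) ∫ g |x|² + log(2π) ∫ g + 1/e`. -/
theorem negative_entropy_bound
    (g : EuclideanSpace ℝ (Fin 2) → ℝ) (hg : ∀ x, 0 ≤ g x)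
    (hmeas : Measurable g)
    (hint : Integrable g)
    (hmom : Integrable (fun x => g x * ‖x‖ ^ 2))
    (hent : Integrable (fun x => g x * max (-Real.log (g x)) 0)) :
    ∫ x, g x * max (-Real.log (g x)) 0 ≤
      (1 / 2) * (∫ x, g x * ‖x‖ ^ 2) + Real.log (2 * Real.pi) * (∫ x, g x)
        + 1 / Real.exp 1 :=
  negative_entropy_bound_general g hg hint hmom
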